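/- For every integer n ≥ 3, the (2,2,2)-domination number of the path P_n equals 2γ_t(P_n); explicitly it equals n if n ≡ 0 (mod 4), n+1 if n ≡ 1,3 (mod 4), and n+2 if n ≡ 2 (mod 4). -/

import Mathlib

open scoped Classical
open Finset SimpleGraph

/-- A `w`-dominating function: `f : V → {0,…,l}` with `f(N(v)) ≥ w_{f(v)}` for all `v`. -/
def WDom {V : Type*} [Fintype V] (G : SimpleGraph V) {l : ℕ} (w : Fin (l+1) → ℕ)
    (f : V → Fin (l+1)) : Prop :=
  ∀ v, w (f v) ≤ ∑ u, if G.Adj v u then (f u : ℕ) else 0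

/-- The `w`-domination number. -/
noncomputable def gammaW {V : Type*} [Fintype V] (G : SimpleGraph V) {l : ℕ}
    (w : Fin (l+1) → ℕ) : ℕ :=
  sInf {n | ∃ f : V → Fin (l+1), WDom G w f ∧ ∑ v, (f v : ℕ) = n}

/-- The Italian domination number `γ_I = γ_{(2,0,0)}`. -/
noncomputable def gammaI {V : Type*} [Fintype V] (G : SimpleGraph V) : ℕ :=
  gammaW G ![2,0,0]

/-- The domination number. -/
noncomputable def gamma {V : Type*} [Fintype V] (G : SimpleGraph V) : ℕ :=
  sInf {n | ∃ S : Finset V, (∀ v, v ∈ S ∨ ∃ u ∈ S, G.Adj u v) ∧ S.card = n}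

/-- The total domination number. -/
noncomputable def gammaT {V : Type*} [Fintype V] (G : SimpleGraph V) : ℕ :=
  sInf {n | ∃ S : Finset V, (∀ v, ∃ u ∈ S, G.Adj u v) ∧ S.card = n}

/-- The 2-domination number. -/
noncomputable def gamma2 {V : Type*} [Fintype V] (G : SimpleGraph V) : ℕ :=
  sInf {n | ∃ S : Finset V, (∀ v ∉ S, 2 ≤ (S.filter (fun u => G.Adj u v)).card) ∧ S.card = n}

/-- The double domination number. -/
noncomputable def gammaX2 {V : Type*} [Fintype V] (G : SimpleGraph V) : ℕ :=
  sInf {n | ∃ S : Finset V, (∀ v, 2 ≤ (S.filter (fun u => u = v ∨ G.Adj u v)).card) ∧ S.card = n}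

/-- The double total domination number. -/
noncomputable def gammaX2T {V : Type*} [Fintype V] (G : SimpleGraph V) : ℕ :=
  sInf {n | ∃ S : Finset V, (∀ v, 2 ≤ (S.filter (fun u => G.Adj u v)).card) ∧ S.card = n}

/-- The lexicographic product `G ∘ H`. -/
def lexProd {V W : Type*} (G : SimpleGraph V) (H : SimpleGraph W) : SimpleGraph (V × W) where
  Adj x y := G.Adj x.1 y.1 ∨ (x.1 = y.1 ∧ H.Adj x.2 y.2)
  symm := by
    constructor
    rintro x y (h | ⟨h1, h2⟩)
    · exact Or.inl h.symm
    · exact Or.inr ⟨h1.symm, h2.symm⟩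
  loopless := by
    constructor
    rintro x (h | ⟨_, h⟩)
    · exact G.irrefl h
    · exact H.irrefl h

/-!
The vertices `v` of `P_n` with `v % 4 ∈ {0, 1}` have pairwise disjoint open neighbourhoods
(an open packing), so every `(2,2,2)`-dominating function has weight at least twice their number,
which is the stated formula. Conversely, one neighbour of each of these vertices gives a total
dominating set of at most that size, and twice the indicator of any total dominating set is
`(2,2,2)`-dominating. Hence `formula ≤ γ_{(2,2,2)} ≤ 2 γ_t ≤ formula`.
-/

section OpenPacking

variable {V : Type*} [Fintype V] (G : SimpleGraph V)

def IsTotalDominating (S : Finset V) : Prop :=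
  ∀ v, ∃ u ∈ S, G.Adj u v

def IsOpenPacking (D : Finset V) : Prop :=
  (D : Set V).PairwiseDisjoint fun d => univ.filter (G.Adj d)

variable {G}

theorem gammaT_le_card {S : Finset V} (hS : IsTotalDominating G S) : gammaT G ≤ #S :=
  Nat.sInf_le ⟨S, hS, rfl⟩

theorem IsTotalDominating.wDom_two_indicator {S : Finset V} (hS : IsTotalDominating G S)
    {w : Fin 3 → ℕ} (hw : ∀ j, w j ≤ 2) : WDom G w fun v => if v ∈ S then 2 else 0 := by
  intro v
  obtain ⟨u, huS, huv⟩ := hS v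
  refine (hw _).trans (le_trans ?_ (single_le_sum (fun _ _ => Nat.zero_le _) (mem_univ u)))
  simp [huv.symm, huS]

theorem sum_two_indicator (S : Finset V) :
    ∑ v, ((if v ∈ S then 2 else 0 : Fin 3) : ℕ) = 2 * #S := by
  simp [apply_ite Fin.val, mul_comm]

theorem gammaW_le_two_mul_gammaT {S : Finset V} (hS : IsTotalDominating G S)
    {w : Fin 3 → ℕ} (hw : ∀ j, w j ≤ 2) : gammaW G w ≤ 2 * gammaT G := by
  obtain ⟨T, hT, hTcard⟩ :=
    Nat.sInf_mem (s := {n | ∃ S : Finset V, IsTotalDominating G S ∧ #S = n}) ⟨#S, S, hS, rfl⟩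
  refine Nat.sInf_le ⟨_, hT.wDom_two_indicator hw, ?_⟩
  rw [sum_two_indicator, hTcard]
  rfl

theorem IsOpenPacking.mul_card_le_sum {D : Finset V} (hD : IsOpenPacking G D) {l c : ℕ}
    {w : Fin (l + 1) → ℕ} (hw : ∀ j, c ≤ w j) {f : V → Fin (l + 1)} (hf : WDom G w f) :
    c * #D ≤ ∑ v, (f v : ℕ) :=
  calc c * #D = ∑ d ∈ D, c := by rw [sum_const, smul_eq_mul, mul_comm]
    _ ≤ ∑ d ∈ D, ∑ u ∈ univ.filter (G.Adj d), (f u : ℕ) := by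
      refine sum_le_sum fun d _ => (hw (f d)).trans ?_
      rw [sum_filter]
      exact hf d
    _ = ∑ u ∈ D.biUnion fun d => univ.filter (G.Adj d), (f u : ℕ) := (sum_biUnion hD).symm
    _ ≤ ∑ v, (f v : ℕ) := sum_le_sum_of_subset (subset_univ _)

theorem IsOpenPacking.mul_card_le_gammaW {D : Finset V} (hD : IsOpenPacking G D) {l c : ℕ}
    {w : Fin (l + 1) → ℕ} (hw : ∀ j, c ≤ w j) (hne : ∃ f, WDom G w f) :
    c * #D ≤ gammaW G w := by
  obtain ⟨f, hf⟩ := hne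
  refine le_csInf ⟨_, f, hf, rfl⟩ ?_
  rintro _ ⟨g, hg, rfl⟩
  exact hD.mul_card_le_sum hw hg

end OpenPacking

section Path

def pathPacking (n : ℕ) : Finset (Fin n) :=
  univ.filter fun v => v.val % 4 < 2

theorem isOpenPacking_pathPacking (n : ℕ) : IsOpenPacking (pathGraph n) (pathPacking n) := by
  intro a ha b hb hab
  rw [Function.onFun, Finset.disjoint_left]
  intro u hau hbu
  simp only [mem_filter, mem_univ, true_and, pathGraph_adj] at hau hbu
  simp only [pathPacking, coe_filter, mem_univ, true_and, Set.mem_ofPred_eq] at ha hb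
  have := Fin.val_ne_of_ne hab
  omega

theorem card_filter_range_mod_four_lt_two (n : ℕ) :
    #((range n).filter (· % 4 < 2)) = (n + 3) / 4 + (n + 2) / 4 := by
  induction n with
  | zero => rfl
  | succ n ih =>
    rw [range_add_one, filter_insert]
    split_ifs
    · rw [card_insert_of_notMem (by simp), ih]
      omega
    · omega

theorem two_mul_card_pathPacking (n : ℕ) :
    2 * #(pathPacking n) = if n % 4 = 0 then n else if n % 4 = 2 then n + 2 else n + 1 := by
  have h : #(pathPacking n) = #((range n).filter (· % 4 < 2)) := by
    rw [pathPacking, card_filter, card_filter,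
      ← Fin.sum_univ_eq_sum_range (fun i => if i % 4 < 2 then 1 else 0)]
  rw [h, card_filter_range_mod_four_lt_two]
  split_ifs <;> omega

def pathNeighbor (n : ℕ) (v : Fin n) : Fin n :=
  if h : v.val + 1 < n then ⟨v + 1, h⟩ else ⟨v - 1, by omega⟩

-- `v` is adjacent to the chosen neighbour of `v` if `v % 4 < 2`, and to that of `v - 2` otherwise.
theorem isTotalDominating_image_pathNeighbor {n : ℕ} (hn : 2 ≤ n) :
    IsTotalDominating (pathGraph n) ((pathPacking n).image (pathNeighbor n)) := by
  intro v
  let d : Fin n := ⟨if v.val % 4 < 2 then v else v - 2, by split_ifs <;> omega⟩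
  refine ⟨pathNeighbor n d, mem_image_of_mem _ ?_, ?_⟩
  · simp only [pathPacking, mem_filter, mem_univ, true_and, d]
    split_ifs <;> omega
  · simp only [pathNeighbor, pathGraph_adj, d]
    split_ifs <;> simp <;> omega

end Path

theorem gammaW222_path (n : ℕ) (hn : 3 ≤ n) :
    gammaW (SimpleGraph.pathGraph n) ![2,2,2] = 2 * gammaT (SimpleGraph.pathGraph n) ∧
    gammaW (SimpleGraph.pathGraph n) ![2,2,2] =
      (if n % 4 = 0 then n else if n % 4 = 2 then n + 2 else n + 1) := by
  have hS := isTotalDominating_image_pathNeighbor (n := n) (by omega)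
  have hw : ∀ j, (![2,2,2] : Fin 3 → ℕ) j = 2 := by decide
  have lower : 2 * #(pathPacking n) ≤ gammaW (pathGraph n) ![2,2,2] :=
    (isOpenPacking_pathPacking n).mul_card_le_gammaW (fun j => (hw j).ge)
      ⟨_, hS.wDom_two_indicator fun j => (hw j).le⟩
  have middle := gammaW_le_two_mul_gammaT hS fun j => (hw j).le
  have upper : gammaT (pathGraph n) ≤ #(pathPacking n) := (gammaT_le_card hS).trans card_image_le
  have hcard := two_mul_card_pathPacking n
  omega
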